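/- arXiv:2307.01661 — 3 statements merged into one kernel-verified Lean document; each statement's English description precedes it below -/
import Mathlib

section
/- Let G be a finite group. Then the enhanced power graph P_E(G) is a line graph of some graph if and only if G is cyclic. -/
open Subgroup

/-- A graph is a line graph if it is isomorphic to the line graph of some graph. -/
def IsLineGraph {V : Type} (Γ : SimpleGraph V) : Prop :=
  ∃ (W : Type) (H : SimpleGraph W), Nonempty (Γ ≃g H.lineGraph)

/-- The power graph of a group: distinct `x`, `y` are adjacent iff one is a power
of the other. -/
def powerGraph (G : Type) [Group G] : SimpleGraph G where
  Adj x y := x ≠ y ∧ (x ∈ zpowers y ∨ y ∈ zpowers x)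
  symm := ⟨by rintro x y ⟨hne, h⟩; exact ⟨hne.symm, h.symm⟩⟩
  loopless := ⟨by rintro x ⟨hne, _⟩; exact hne rfl⟩

/-- The enhanced power graph of a group: distinct `x`, `y` are adjacent iff both are
powers of a common element. -/
def enhancedPowerGraph (G : Type) [Group G] : SimpleGraph G where
  Adj x y := x ≠ y ∧ ∃ z : G, x ∈ zpowers z ∧ y ∈ zpowers z
  symm := ⟨by rintro x y ⟨hne, z, hx, hy⟩; exact ⟨hne.symm, z, hy, hx⟩⟩
  loopless := ⟨by rintro x ⟨hne, _⟩; exact hne rfl⟩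

/-- A vertex is dominating if it is adjacent to all other vertices. -/
def IsDominatingVertex {V : Type} (Γ : SimpleGraph V) (v : V) : Prop :=
  ∀ w : V, w ≠ v → Γ.Adj v w

/-- The graph induced on the non-dominating vertices. -/
def properGraph {V : Type} (Γ : SimpleGraph V) :
    SimpleGraph {v : V | ¬ IsDominatingVertex Γ v} :=
  Γ.induce {v : V | ¬ IsDominatingVertex Γ v}

/-- The proper power graph `P**(G)`. -/
abbrev properPowerGraph (G : Type) [Group G] := properGraph (powerGraph G)

/-- The proper enhanced power graph `P_E**(G)`. -/
abbrev properEnhancedPowerGraph (G : Type) [Group G] := properGraph (enhancedPowerGraph G)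

/-- A maximal cyclic subgroup: cyclic and not properly contained in a cyclic subgroup. -/
def IsMaxCyclic {G : Type} [Group G] (M : Subgroup G) : Prop :=
  IsCyclic M ∧ ∀ N : Subgroup G, IsCyclic N → M ≤ N → N = M

/-- `T(G)`: the intersection of all maximal cyclic subgroups of `G`. -/
def cyclicCore (G : Type) [Group G] : Subgroup G :=
  ⨅ (M : Subgroup G) (_ : IsMaxCyclic M), M

/-- `G` is an elementary abelian 2-group `Z₂ × ⋯ × Z₂`. -/
def IsElemAbelianTwo (G : Type) [Group G] : Prop :=
  ∃ k : ℕ, 1 ≤ k ∧ Nonempty (G ≃* (Fin k → Multiplicative (ZMod 2)))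

/-!
Line graphs are claw-free: the three edges adjacent to an edge `e` meet it in its two
endpoints, so two of them share an endpoint. If `G` is cyclic, `P_E(G)` is complete, hence the
line graph of a star. Otherwise a finite `G` has three distinct maximal cyclic subgroups; their
generators are pairwise non-adjacent (a common cyclic overgroup would equal both), yet all are
adjacent to `1`, which gives a claw.
-/

namespace SimpleGraph

variable {V W : Type*}

def IsClawFree (Γ : SimpleGraph V) : Prop :=
  ∀ ⦃v a b c : V⦄, Γ.Adj v a → Γ.Adj v b → Γ.Adj v c → a ≠ b → a ≠ c → b ≠ c →
    Γ.Adj a b ∨ Γ.Adj a c ∨ Γ.Adj b c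

theorem IsClawFree.comap {Γ : SimpleGraph V} {Δ : SimpleGraph W} (f : Γ ↪g Δ)
    (h : Δ.IsClawFree) : Γ.IsClawFree := by
  intro v a b c hva hvb hvc hab hac hbc
  simpa only [f.map_adj_iff] using
    h (f.map_adj_iff.mpr hva) (f.map_adj_iff.mpr hvb) (f.map_adj_iff.mpr hvc)
      (f.injective.ne hab) (f.injective.ne hac) (f.injective.ne hbc)

theorem lineGraph_isClawFree (H : SimpleGraph V) : H.lineGraph.IsClawFree := by
  intro e a b c hea heb hec hab hac hbc
  simp only [lineGraph_adj_iff_exists] at *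
  obtain ⟨-, x, hxe, hxa⟩ := hea
  obtain ⟨-, y, hye, hyb⟩ := heb
  obtain ⟨-, z, hze, hzc⟩ := hec
  by_cases hxy : x = y
  · exact Or.inl ⟨hab, x, hxa, hxy ▸ hyb⟩
  · have he : (e : Sym2 V) = s(x, y) := (Sym2.mem_and_mem_iff hxy).mp ⟨hxe, hye⟩
    rw [he, Sym2.mem_iff] at hze
    rcases hze with rfl | rfl
    · exact Or.inr (Or.inl ⟨hac, z, hxa, hzc⟩)
    · exact Or.inr (Or.inr ⟨hbc, z, hyb, hzc⟩)

end SimpleGraph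

open SimpleGraph

theorem isLineGraph_top (V : Type) : IsLineGraph (⊤ : SimpleGraph V) := by
  refine ⟨Option V, starGraph none, ⟨?_⟩⟩
  let f : V → (starGraph (none : Option V)).edgeSet := fun v =>
    ⟨s(none, some v), starGraph_center_adj (Option.some_ne_none v).symm⟩
  have hf : f.Injective := fun v w h => Option.some_injective _ <|
    Sym2.congr_right.mp (congrArg Subtype.val h)
  refine ⟨Equiv.ofBijective f ⟨hf, ?_⟩, ?_⟩
  · rintro ⟨e, he⟩
    induction e using Sym2.ind with | _ u w => ?_
    rw [mem_edgeSet, starGraph_adj] at he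
    rcases he with ⟨hne, rfl | rfl⟩
    · obtain ⟨v, rfl⟩ := Option.ne_none_iff_exists'.mp hne.symm
      exact ⟨v, rfl⟩
    · obtain ⟨v, rfl⟩ := Option.ne_none_iff_exists'.mp hne
      exact ⟨v, Subtype.ext Sym2.eq_swap⟩
  · intro v w
    simp only [lineGraph_adj_iff_exists, top_adj, (Equiv.injective _).ne_iff]
    exact ⟨fun h => h.1, fun h => ⟨h, none, Sym2.mem_mk_left _ _, Sym2.mem_mk_left _ _⟩⟩

theorem IsLineGraph.isClawFree {V : Type} {Γ : SimpleGraph V} (h : IsLineGraph Γ) :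
    Γ.IsClawFree := by
  obtain ⟨W, H, ⟨φ⟩⟩ := h
  exact H.lineGraph_isClawFree.comap φ.toEmbedding

section MaxCyclic

variable {G : Type} [Group G]

theorem exists_isMaxCyclic_zpowers_mem [Finite G] (x : G) :
    ∃ a : G, IsMaxCyclic (zpowers a) ∧ x ∈ zpowers a := by
  obtain ⟨M, ⟨hMcyc, hxM⟩, hmax⟩ := Set.Finite.exists_maximalFor id
    {N : Subgroup G | IsCyclic N ∧ x ∈ N} (Set.toFinite _)
    ⟨zpowers x, inferInstance, mem_zpowers x⟩
  obtain ⟨a, rfl⟩ := (Subgroup.isCyclic_iff_exists_zpowers_eq_top M).mp hMcyc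
  exact ⟨a, ⟨hMcyc, fun N hN hle => (hmax ⟨hN, hle hxM⟩ hle).antisymm hle⟩, hxM⟩

theorem zpowers_eq_of_isMaxCyclic {a b z : G} (ha : IsMaxCyclic (zpowers a))
    (hb : IsMaxCyclic (zpowers b)) (haz : a ∈ zpowers z) (hbz : b ∈ zpowers z) :
    zpowers a = zpowers b :=
  (ha.2 _ inferInstance (zpowers_le.mpr haz)).symm.trans
    (hb.2 _ inferInstance (zpowers_le.mpr hbz))

theorem ne_one_of_isMaxCyclic {a b : G} (ha : IsMaxCyclic (zpowers a))
    (hb : IsMaxCyclic (zpowers b)) (hab : zpowers a ≠ zpowers b) : a ≠ 1 := by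
  rintro rfl
  exact hab (zpowers_eq_of_isMaxCyclic ha hb (one_mem _) (mem_zpowers b))

/-- Starting from any `a`, pick `x ∉ ⟨a⟩` and then maximal cyclic subgroups through `x` and
through `a * x`. -/
theorem exists_three_isMaxCyclic_zpowers [Finite G] (hG : ¬ IsCyclic G) :
    ∃ a b c : G, IsMaxCyclic (zpowers a) ∧ IsMaxCyclic (zpowers b) ∧
      IsMaxCyclic (zpowers c) ∧ zpowers a ≠ zpowers b ∧ zpowers a ≠ zpowers c ∧
      zpowers b ≠ zpowers c := by
  obtain ⟨a, ha, -⟩ := exists_isMaxCyclic_zpowers_mem (1 : G)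
  obtain ⟨x, hxa⟩ : ∃ x, x ∉ zpowers a := by
    by_contra! h
    exact hG ⟨a, h⟩
  obtain ⟨b, hb, hxb⟩ := exists_isMaxCyclic_zpowers_mem x
  have hab : zpowers a ≠ zpowers b := fun h => hxa (h ▸ hxb)
  have ha_not_mem : a ∉ zpowers b := fun h =>
    hab (zpowers_eq_of_isMaxCyclic ha hb h (mem_zpowers b))
  obtain ⟨c, hc, hyc⟩ := exists_isMaxCyclic_zpowers_mem (a * x)
  have hya : a * x ∉ zpowers a := fun h =>
    hxa (by simpa using mul_mem (inv_mem (mem_zpowers a)) h)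
  have hyb : a * x ∉ zpowers b := fun h => ha_not_mem (by simpa using mul_mem h (inv_mem hxb))
  exact ⟨a, b, c, ha, hb, hc, hab, fun h => hya (h ▸ hyc), fun h => hyb (h ▸ hyc)⟩

end MaxCyclic

section EnhancedPowerGraph

variable {G : Type} [Group G]

theorem enhancedPowerGraph_one_adj {x : G} (hx : x ≠ 1) : (enhancedPowerGraph G).Adj 1 x :=
  ⟨hx.symm, x, one_mem _, mem_zpowers x⟩

theorem enhancedPowerGraph_not_adj_of_isMaxCyclic {a b : G} (ha : IsMaxCyclic (zpowers a))
    (hb : IsMaxCyclic (zpowers b)) (hab : zpowers a ≠ zpowers b) :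
    ¬ (enhancedPowerGraph G).Adj a b := by
  rintro ⟨-, z, haz, hbz⟩
  exact hab (zpowers_eq_of_isMaxCyclic ha hb haz hbz)

theorem not_isClawFree_enhancedPowerGraph [Finite G] (hG : ¬ IsCyclic G) :
    ¬ (enhancedPowerGraph G).IsClawFree := by
  obtain ⟨a, b, c, ha, hb, hc, hab, hac, hbc⟩ := exists_three_isMaxCyclic_zpowers hG
  intro hclaw
  rcases hclaw (enhancedPowerGraph_one_adj (ne_one_of_isMaxCyclic ha hb hab))
      (enhancedPowerGraph_one_adj (ne_one_of_isMaxCyclic hb ha hab.symm))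
      (enhancedPowerGraph_one_adj (ne_one_of_isMaxCyclic hc ha hac.symm))
      (fun h => hab (congrArg zpowers h)) (fun h => hac (congrArg zpowers h))
      (fun h => hbc (congrArg zpowers h)) with
    h | h | h
  · exact enhancedPowerGraph_not_adj_of_isMaxCyclic ha hb hab h
  · exact enhancedPowerGraph_not_adj_of_isMaxCyclic ha hc hac h
  · exact enhancedPowerGraph_not_adj_of_isMaxCyclic hb hc hbc h

theorem enhancedPowerGraph_eq_top [IsCyclic G] : enhancedPowerGraph G = ⊤ := by
  obtain ⟨g, hg⟩ := IsCyclic.exists_generator (α := G)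
  ext x y
  exact ⟨fun h => h.1, fun h => ⟨h, g, hg x, hg y⟩⟩

end EnhancedPowerGraph

/-- `P_E(G)` is a line graph iff `G` is cyclic. -/
theorem enhancedPowerGraph_isLineGraph_iff (G : Type) [Group G] [Fintype G] :
    IsLineGraph (enhancedPowerGraph G) ↔ IsCyclic G := by
  refine ⟨fun hL => ?_, fun hG => ?_⟩
  · by_contra hG
    exact not_isClawFree_enhancedPowerGraph hG hL.isClawFree
  · rw [enhancedPowerGraph_eq_top]
    exact isLineGraph_top G
end

section
/- Let G be a finite non-cyclic group such that the intersection of any two distinct maximal cyclic subgroups of G equals T(G), the intersection of all maximal cyclic subgroups of G. Then the proper enhanced power graph P_E**(G) is a line graph of some graph. -/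
open Subgroup

/-! If an element lies in two distinct maximal cyclic subgroups, the hypothesis puts it in
`T(G)`, and an element of `T(G)` lies in every maximal cyclic subgroup, hence dominates
`P_E(G)`. So every vertex of `P_E**(G)` lies in exactly one maximal cyclic subgroup, and two
vertices are adjacent iff these coincide: `P_E**(G)` is a disjoint union of cliques, which is the
line graph of a disjoint union of stars. -/

namespace SimpleGraph

def starForest {V I : Type} (f : V → I) : SimpleGraph (V ⊕ I) :=
  fromRel fun a b => ∃ v, a = .inl v ∧ b = .inr (f v)

lemma isLineGraph_of_adj_iff {V I : Type} (Γ : SimpleGraph V) (f : V → I)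
    (hf : ∀ x y, Γ.Adj x y ↔ x ≠ y ∧ f x = f y) : IsLineGraph Γ := by
  let e : V → (starForest f).edgeSet := fun v =>
    ⟨s(.inl v, .inr (f v)), by simp [starForest]⟩
  have he : Function.Bijective e := by
    refine ⟨fun v w hvw => (by simpa [e] using congrArg Subtype.val hvw : v = w ∧ _).1, ?_⟩
    rintro ⟨x, hx⟩
    induction x using Sym2.inductionOn with
    | hf a b =>
      rw [mem_edgeSet, starForest, fromRel_adj] at hx
      obtain ⟨-, ⟨v, rfl, rfl⟩ | ⟨v, rfl, rfl⟩⟩ := hx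
      · exact ⟨v, rfl⟩
      · exact ⟨v, Subtype.ext Sym2.eq_swap⟩
  refine ⟨V ⊕ I, starForest f, ⟨⟨Equiv.ofBijective e he, fun {v w} => ?_⟩⟩⟩
  rw [Equiv.ofBijective_apply, Equiv.ofBijective_apply, lineGraph_adj_iff_exists,
    he.injective.ne_iff, hf]
  simp only [e, Sym2.mem_iff, exists_eq_or_imp, exists_eq_left, Sum.inl.injEq, Sum.inr.injEq,
    reduceCtorEq]
  tauto

end SimpleGraph

section MaxCyclic

variable {G : Type} [Group G]

lemma exists_isMaxCyclic_mem [Finite G] (x : G) : ∃ M : Subgroup G, IsMaxCyclic M ∧ x ∈ M := by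
  obtain ⟨M, hM, hmax⟩ := (Set.toFinite {N : Subgroup G | IsCyclic N ∧ x ∈ N}).exists_maximal
    ⟨zpowers x, inferInstance, mem_zpowers x⟩
  exact ⟨M, ⟨hM.1, fun N hN hMN => le_antisymm (hmax ⟨hN, hMN hM.2⟩ hMN) hMN⟩, hM.2⟩

lemma enhancedPowerGraph_adj_iff [Finite G] {x y : G} :
    (enhancedPowerGraph G).Adj x y ↔ x ≠ y ∧ ∃ M : Subgroup G, IsMaxCyclic M ∧ x ∈ M ∧ y ∈ M := by
  refine and_congr_right fun _ => ⟨?_, ?_⟩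
  · rintro ⟨z, hxz, hyz⟩
    obtain ⟨M, hM, hzM⟩ := exists_isMaxCyclic_mem z
    exact ⟨M, hM, zpowers_le.mpr hzM hxz, zpowers_le.mpr hzM hyz⟩
  · rintro ⟨M, hM, hxM, hyM⟩
    obtain ⟨z, rfl⟩ := M.isCyclic_iff_exists_zpowers_eq_top.mp hM.1
    exact ⟨z, hxM, hyM⟩

lemma isDominatingVertex_of_mem_cyclicCore [Finite G] {x : G} (hx : x ∈ cyclicCore G) :
    IsDominatingVertex (enhancedPowerGraph G) x := by
  intro y hyx
  obtain ⟨M, hM, hyM⟩ := exists_isMaxCyclic_mem y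
  have hxM : x ∈ M := (iInf₂_le M hM : cyclicCore G ≤ M) hx
  exact enhancedPowerGraph_adj_iff.mpr ⟨hyx.symm, M, hM, hxM, hyM⟩

lemma IsMaxCyclic.eq_of_not_isDominatingVertex [Finite G]
    (h : ∀ M N : Subgroup G, IsMaxCyclic M → IsMaxCyclic N → M ≠ N → M ⊓ N ≤ cyclicCore G)
    {x : G} (hx : ¬ IsDominatingVertex (enhancedPowerGraph G) x) {M N : Subgroup G}
    (hM : IsMaxCyclic M) (hN : IsMaxCyclic N) (hxM : x ∈ M) (hxN : x ∈ N) : M = N := by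
  by_contra hne
  exact hx (isDominatingVertex_of_mem_cyclicCore (h M N hM hN hne ⟨hxM, hxN⟩))

end MaxCyclic

theorem properEnhancedPowerGraph_isLineGraph_of_inter_eq_core_general (G : Type) [Group G] [Fintype G]
    (h : ∀ M N : Subgroup G, IsMaxCyclic M → IsMaxCyclic N → M ≠ N →
      M ⊓ N = cyclicCore G) :
    IsLineGraph (properEnhancedPowerGraph G) := by
  choose M hM hxM using fun x : G => exists_isMaxCyclic_mem x
  have hM_eq {x : G} (hx : ¬ IsDominatingVertex (enhancedPowerGraph G) x) {N : Subgroup G}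
      (hN : IsMaxCyclic N) (hxN : x ∈ N) : M x = N :=
    (hM x).eq_of_not_isDominatingVertex (fun M N hM hN hne => (h M N hM hN hne).le) hx hN
      (hxM x) hxN
  refine SimpleGraph.isLineGraph_of_adj_iff _ (fun x => M x) fun x y => ?_
  rw [properEnhancedPowerGraph, properGraph, SimpleGraph.comap_adj, enhancedPowerGraph_adj_iff]
  refine and_congr Subtype.coe_ne_coe ⟨?_, fun hxy => ⟨M x, hM x, hxM x, hxy ▸ hxM y⟩⟩
  rintro ⟨N, hN, hxN, hyN⟩
  exact (hM_eq x.2 hN hxN).trans (hM_eq y.2 hN hyN).symm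

/-- if in a finite non-cyclic group the intersection of any two distinct
maximal cyclic subgroups equals `T(G)`, then `P_E**(G)` is a line graph. -/
theorem properEnhancedPowerGraph_isLineGraph_of_inter_eq_core (G : Type) [Group G] [Fintype G]
    (hnc : ¬ IsCyclic G)
    (h : ∀ M N : Subgroup G, IsMaxCyclic M → IsMaxCyclic N → M ≠ N →
      M ⊓ N = cyclicCore G) :
    IsLineGraph (properEnhancedPowerGraph G) :=
  properEnhancedPowerGraph_isLineGraph_of_inter_eq_core_general G h
end

section
/- Let G be a finite cyclic group. Then the power graph P(G) is the complement of a line graph of some graph if and only if G ≅ Z_6 or G ≅ Z_{p^α} for some prime p and α ≥ 0. -/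
open Subgroup

/-! In a finite cyclic group there is exactly one subgroup of each order dividing the group order,
so `x ∈ ⟨y⟩` iff `orderOf x ∣ orderOf y`, and the complement of `P(G)` joins exactly the elements
of incomparable orders. If `|G| = p ^ α` all orders are comparable and the complement is edgeless,
the line graph of a matching; if `|G| = 6` it is a path on three vertices plus three isolated
vertices, again a line graph. Otherwise `|G|` has a prime divisor `q` and a prime-power divisor
`p ^ e ≥ 4` with `p ≠ q`: an element of order `q` and three non-trivial elements of the subgroup of
order `p ^ e` span an induced claw `K_{1,3}` in the complement, and line graphs are claw-free. -/

open Function SimpleGraph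

theorem IsLineGraph.of_iso {V V' : Type} {Γ : SimpleGraph V} {Γ' : SimpleGraph V'}
    (e : Γ ≃g Γ') (h : IsLineGraph Γ') : IsLineGraph Γ :=
  let ⟨W, H, ⟨φ⟩⟩ := h
  ⟨W, H, ⟨e.trans φ⟩⟩

def SimpleGraph.Iso.compl {V V' : Type} {Γ : SimpleGraph V} {Γ' : SimpleGraph V'}
    (e : Γ ≃g Γ') : Γᶜ ≃g Γ'ᶜ where
  toEquiv := e.toEquiv
  map_rel_iff' := by
    intro a b
    simp only [compl_adj]
    exact and_congr e.injective.ne_iff (not_congr e.map_adj_iff)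

theorem isLineGraph_of_edgeLabelling {V W : Type} {Γ : SimpleGraph V} (f : V → Sym2 W)
    (hf : Injective f) (hdiag : ∀ v, ¬ (f v).IsDiag)
    (hadj : ∀ u v, u ≠ v → (Γ.Adj u v ↔ ∃ w, w ∈ f u ∧ w ∈ f v)) : IsLineGraph Γ := by
  let H := fromEdgeSet (Set.range f)
  have hH : H.edgeSet = Set.range f := by
    rw [edgeSet_fromEdgeSet, sdiff_eq_left, Set.disjoint_left]
    rintro _ ⟨v, rfl⟩
    exact hdiag v
  refine ⟨W, H, ⟨(Equiv.ofInjective f hf).trans (Equiv.setCongr hH.symm), ?_⟩⟩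
  intro u v
  rw [lineGraph_adj_iff_exists]
  by_cases huv : u = v
  · simp [huv]
  · simp [Subtype.ext_iff, hadj u v huv, hf.ne huv]

theorem isLineGraph_bot (V : Type) : IsLineGraph (⊥ : SimpleGraph V) := by
  refine isLineGraph_of_edgeLabelling (fun v : V => s((v, false), (v, true))) ?_ ?_ ?_
  · intro u v h
    simpa using h
  · simp
  · intro u v huv
    simp only [bot_adj, false_iff, not_exists, Sym2.mem_iff]
    rintro w ⟨hu, hv⟩
    have hwu : w.1 = u := by rcases hu with rfl | rfl <;> rfl
    have hwv : w.1 = v := by rcases hv with rfl | rfl <;> rfl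
    exact huv (hwu.symm.trans hwv)

theorem SimpleGraph.lineGraph_clawFree {W : Type} {H : SimpleGraph W} {c a b d : H.edgeSet}
    (hca : H.lineGraph.Adj c a) (hcb : H.lineGraph.Adj c b) (hcd : H.lineGraph.Adj c d)
    (hab : a ≠ b) (had : a ≠ d) (hbd : b ≠ d) :
    H.lineGraph.Adj a b ∨ H.lineGraph.Adj a d ∨ H.lineGraph.Adj b d := by
  simp only [lineGraph_adj_iff_exists] at *
  obtain ⟨-, wa, hwa, hwa'⟩ := hca
  obtain ⟨-, wb, hwb, hwb'⟩ := hcb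
  obtain ⟨-, wd, hwd, hwd'⟩ := hcd
  -- `a`, `b`, `d` each meet `c` in one of its two endpoints, so two of them meet it in the same one
  generalize (c : Sym2 W) = e at hwa hwb hwd
  induction e using Sym2.ind with
  | _ u v =>
    simp only [Sym2.mem_iff] at hwa hwb hwd
    rcases hwa with rfl | rfl <;> rcases hwb with rfl | rfl <;> rcases hwd with rfl | rfl <;>
      first
      | exact Or.inl ⟨hab, _, hwa', hwb'⟩
      | exact Or.inr (Or.inl ⟨had, _, hwa', hwd'⟩)
      | exact Or.inr (Or.inr ⟨hbd, _, hwb', hwd'⟩)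

theorem IsLineGraph.clawFree {V : Type} {Γ : SimpleGraph V} (h : IsLineGraph Γ) {c a b d : V}
    (hca : Γ.Adj c a) (hcb : Γ.Adj c b) (hcd : Γ.Adj c d) (hab : a ≠ b) (had : a ≠ d)
    (hbd : b ≠ d) : Γ.Adj a b ∨ Γ.Adj a d ∨ Γ.Adj b d := by
  obtain ⟨W, H, ⟨φ⟩⟩ := h
  simpa only [φ.map_adj_iff] using lineGraph_clawFree (φ.map_adj_iff.2 hca)
    (φ.map_adj_iff.2 hcb) (φ.map_adj_iff.2 hcd) (φ.injective.ne hab) (φ.injective.ne had)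
    (φ.injective.ne hbd)

theorem Nat.dvd_or_dvd_of_dvd_prime_pow {p n a b : ℕ} (hp : p.Prime) (ha : a ∣ p ^ n)
    (hb : b ∣ p ^ n) : a ∣ b ∨ b ∣ a := by
  obtain ⟨i, -, rfl⟩ := (Nat.dvd_prime_pow hp).1 ha
  obtain ⟨j, -, rfl⟩ := (Nat.dvd_prime_pow hp).1 hb
  exact (le_total i j).imp (pow_dvd_pow p) (pow_dvd_pow p)

theorem Nat.exists_prime_pow_dvd_of_ne_six_of_ne_prime_pow {n : ℕ} (hn : n ≠ 0) (h6 : n ≠ 6)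
    (hpp : ∀ p α, p.Prime → n ≠ p ^ α) :
    ∃ p q e, p.Prime ∧ q.Prime ∧ p ≠ q ∧ q ∣ n ∧ p ^ e ∣ n ∧ 4 ≤ p ^ e := by
  have hlarge : ∃ p, p.Prime ∧ p ∣ n ∧ 4 ≤ p ^ n.factorization p := by
    by_contra! hsmall
    -- otherwise every prime power in `n` is `2` or `3`, so `n ∣ 6`
    have hn6 : n ∣ 6 := by
      refine (Nat.factorization_le_iff_dvd hn (by norm_num)).1 fun p => ?_
      by_cases hv : n.factorization p = 0
      · simp [hv]
      have hp : p.Prime := Nat.prime_of_mem_primeFactors (Finsupp.mem_support_iff.2 hv)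
      have hpn : p ^ n.factorization p < 4 := hsmall p hp (Nat.dvd_of_factorization_pos hv)
      have h2 := hp.two_le
      have hv1 : n.factorization p = 1 := by
        by_contra hv1
        have : p ^ 2 ≤ p ^ n.factorization p := Nat.pow_le_pow_right (by omega) (by omega)
        nlinarith
      rw [hv1, pow_one] at hpn
      rw [hv1]
      exact hp.factorization_pos_of_dvd (by norm_num) (by interval_cases p <;> norm_num)
    have : n ≤ 6 := Nat.le_of_dvd (by norm_num) hn6
    interval_cases n
    · exact hn rfl
    · exact hpp 2 0 Nat.prime_two rfl
    · exact hpp 2 1 Nat.prime_two rfl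
    · exact hpp 3 1 Nat.prime_three rfl
    · norm_num at hn6
    · norm_num at hn6
    · exact h6 rfl
  obtain ⟨p, hp, hpn, h4⟩ := hlarge
  obtain ⟨q, hq, hqn, hqp⟩ : ∃ q, q.Prime ∧ q ∣ n ∧ q ≠ p := by
    by_contra! h
    exact hpp p _ hp (Nat.eq_prime_pow_of_unique_prime_dvd hn fun hq hqn => h _ hq hqn)
  exact ⟨p, q, _, hp, hq, hqp.symm, hqn, Nat.ordProj_dvd n p, h4⟩

section PowerGraph

variable {G : Type} [Group G]

theorem IsCyclic.exists_orderOf_eq_of_dvd [Finite G] [IsCyclic G] {d : ℕ}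
    (hd : d ∣ Nat.card G) : ∃ x : G, orderOf x = d := by
  obtain ⟨g, hg⟩ := IsCyclic.exists_ofOrder_eq_natCard (α := G)
  exact ⟨g ^ (orderOf g / d), orderOf_pow_orderOf_div (hg ▸ Nat.card_pos.ne') (hg ▸ hd)⟩

theorem IsCyclic.mem_zpowers_iff_orderOf_dvd [Finite G] [IsCyclic G] {x y : G} :
    x ∈ zpowers y ↔ orderOf x ∣ orderOf y := by
  classical
  have := Fintype.ofFinite G
  refine ⟨orderOf_dvd_of_mem_zpowers, fun hxy => ?_⟩
  -- `zpowers y` already supplies all the at most `orderOf y` solutions of `z ^ orderOf y = 1`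
  have hsub : (zpowers y : Set G).toFinset ⊆ ({z | z ^ orderOf y = 1} : Finset G) := by
    intro z hz
    simpa using orderOf_dvd_iff_pow_eq_one.1 (orderOf_dvd_of_mem_zpowers (by simpa using hz))
  have hcard :
      ({z | z ^ orderOf y = 1} : Finset G).card ≤ (zpowers y : Set G).toFinset.card := by
    rw [Set.toFinset_card, ← Nat.card_eq_fintype_card, SetLike.coe_sort_coe, Nat.card_zpowers]
    exact IsCyclic.card_pow_eq_one_le (orderOf_pos y)
  have hx : x ∈ ({z | z ^ orderOf y = 1} : Finset G) := by
    simpa using orderOf_dvd_iff_pow_eq_one.1 hxy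
  rw [← Finset.eq_of_subset_of_card_le hsub hcard] at hx
  simpa using hx

theorem compl_powerGraph_adj_iff [Finite G] [IsCyclic G] {x y : G} :
    (powerGraph G)ᶜ.Adj x y ↔ ¬ orderOf x ∣ orderOf y ∧ ¬ orderOf y ∣ orderOf x := by
  simp only [SimpleGraph.compl_adj, powerGraph, IsCyclic.mem_zpowers_iff_orderOf_dvd]
  constructor
  · rintro ⟨hne, h⟩
    exact not_or.1 (fun h' => h ⟨hne, h'⟩)
  · rintro ⟨hxy, hyx⟩
    exact ⟨by rintro rfl; exact hxy dvd_rfl, fun h => h.2.elim hxy hyx⟩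

def MulEquiv.powerGraphIso {G' : Type} [Group G'] (e : G ≃* G') :
    powerGraph G ≃g powerGraph G' where
  toEquiv := e.toEquiv
  map_rel_iff' := by
    intro x y
    simp [powerGraph, Subgroup.mem_zpowers_iff, ← map_zpow, e.injective.eq_iff]

theorem nonempty_mulEquiv_multiplicative_zmod_iff [Finite G] [IsCyclic G] (n : ℕ) :
    Nonempty (G ≃* Multiplicative (ZMod n)) ↔ Nat.card G = n := by
  have hZ : Nat.card (Multiplicative (ZMod n)) = n := by
    rw [Nat.card_congr Multiplicative.toAdd, Nat.card_zmod]
  exact ⟨fun ⟨e⟩ => hZ ▸ Nat.card_congr e.toEquiv,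
    fun h => ⟨mulEquivOfCyclicCardEq (h.trans hZ.symm)⟩⟩

theorem compl_powerGraph_eq_bot_of_card_eq_prime_pow [Finite G] [IsCyclic G] {p α : ℕ}
    (hp : p.Prime) (hG : Nat.card G = p ^ α) : (powerGraph G)ᶜ = ⊥ := by
  ext x y
  simp only [compl_powerGraph_adj_iff, SimpleGraph.bot_adj, iff_false, not_and_or, not_not]
  exact Nat.dvd_or_dvd_of_dvd_prime_pow hp (hG ▸ orderOf_dvd_natCard x)
    (hG ▸ orderOf_dvd_natCard y)

theorem not_isLineGraph_compl_powerGraph_of_dvd [Finite G] [IsCyclic G] {p q e : ℕ}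
    (hp : p.Prime) (hq : q.Prime) (hpq : p ≠ q) (hqG : q ∣ Nat.card G)
    (hpeG : p ^ e ∣ Nat.card G) (h4 : 4 ≤ p ^ e) : ¬ IsLineGraph (powerGraph G)ᶜ := by
  intro hG
  obtain ⟨c, hc⟩ := IsCyclic.exists_orderOf_eq_of_dvd hqG
  obtain ⟨h, hh⟩ := IsCyclic.exists_orderOf_eq_of_dvd hpeG
  -- the claw: centre `c` of order `q`, leaves `h, h ^ 2, h ^ 3` in the cyclic `p`-group `⟨h⟩`
  have hinj : Set.InjOn (h ^ ·) (Set.Iio 4) :=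
    pow_injOn_Iio_orderOf.mono (Set.Iio_subset_Iio (hh ▸ h4))
  have hne : ∀ i j, i < 4 → j < 4 → i ≠ j → h ^ i ≠ h ^ j := fun _ _ hi hj => hinj.ne hi hj
  have hdvd : ∀ i, orderOf (h ^ i) ∣ p ^ e := fun i => hh ▸ orderOf_pow_dvd i
  have hleaf : ∀ i j, ¬ (powerGraph G)ᶜ.Adj (h ^ i) (h ^ j) := by
    intro i j
    rw [compl_powerGraph_adj_iff, ← not_or, not_not]
    exact Nat.dvd_or_dvd_of_dvd_prime_pow hp (hdvd i) (hdvd j)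
  have hcentre : ∀ i, 0 < i → i < 4 → (powerGraph G)ᶜ.Adj c (h ^ i) := by
    intro i hi0 hi4
    obtain ⟨k, -, hk⟩ := (Nat.dvd_prime_pow hp).1 (hdvd i)
    have hk0 : k ≠ 0 := by
      rintro rfl
      exact hne i 0 hi4 (by omega) (by omega)
        (by rw [pow_zero, ← orderOf_eq_one_iff, hk, pow_zero])
    rw [compl_powerGraph_adj_iff, hc, hk]
    exact ⟨fun hqp => hpq ((Nat.prime_dvd_prime_iff_eq hq hp).1 (hq.dvd_of_dvd_pow hqp)).symm,
      fun hpq' => hpq ((Nat.prime_dvd_prime_iff_eq hp hq).1 ((dvd_pow_self p hk0).trans hpq'))⟩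
  rcases hG.clawFree (hcentre 1 (by omega) (by omega)) (hcentre 2 (by omega) (by omega))
      (hcentre 3 (by omega) (by omega)) (hne 1 2 (by omega) (by omega) (by omega))
      (hne 1 3 (by omega) (by omega) (by omega)) (hne 2 3 (by omega) (by omega) (by omega))
    with hadj | hadj | hadj <;> exact hleaf _ _ hadj

end PowerGraph

theorem isLineGraph_compl_powerGraph_zmod_six :
    IsLineGraph (powerGraph (Multiplicative (ZMod 6)))ᶜ := by
  have horder : ∀ x : Multiplicative (ZMod 6), orderOf x = 6 / Nat.gcd 6 x.toAdd.val := by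
    intro x
    rw [← ZMod.addOrderOf_coe _ (by norm_num), ZMod.natCast_zmod_val,
      ← orderOf_ofAdd_eq_addOrderOf, ofAdd_toAdd]
  -- the complement is the path `2 - 3 - 4` plus the isolated vertices `0, 1, 5`
  refine isLineGraph_of_edgeLabelling (W := Fin 10)
    (fun x => ![s(4, 5), s(6, 7), s(0, 1), s(1, 2), s(2, 3), s(8, 9)] x.toAdd) ?_ ?_ ?_
  · decide
  · decide
  · intro x y _
    rw [compl_powerGraph_adj_iff, horder, horder]
    revert x y
    decide

/-- for a finite cyclic group, `P(G)` is the complement of a line graph iff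
`G ≅ Z₆` or `G ≅ Z_{p^α}` for some prime `p` and `α ≥ 0`. -/
theorem powerGraph_compl_isLineGraph_iff_of_isCyclic (G : Type) [Group G] [Fintype G]
    (hc : IsCyclic G) :
    IsLineGraph (powerGraph G)ᶜ ↔
      (Nonempty (G ≃* Multiplicative (ZMod 6)) ∨
       ∃ p α : ℕ, p.Prime ∧ Nonempty (G ≃* Multiplicative (ZMod (p ^ α)))) := by
  simp only [nonempty_mulEquiv_multiplicative_zmod_iff]
  constructor
  · intro hG
    by_contra! h
    obtain ⟨p, q, e, hp, hq, hpq, hqG, hpeG, h4⟩ :=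
      Nat.exists_prime_pow_dvd_of_ne_six_of_ne_prime_pow Nat.card_pos.ne' h.1 h.2
    exact not_isLineGraph_compl_powerGraph_of_dvd hp hq hpq hqG hpeG h4 hG
  · rintro (h6 | ⟨p, α, hp, hG⟩)
    · obtain ⟨e⟩ := (nonempty_mulEquiv_multiplicative_zmod_iff 6).2 h6
      exact IsLineGraph.of_iso e.powerGraphIso.compl isLineGraph_compl_powerGraph_zmod_six
    · rw [compl_powerGraph_eq_bot_of_card_eq_prime_pow hp hG]
      exact isLineGraph_bot G
end
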